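/- Let d ≥ 1 be an integer, let A : ℝ^d → ℝ^d be continuous, let φ : ℝ^d → ℝ be continuously differentiable, let a ∈ 𝒮(ℝ^d × ℝ^d) and let w : ℝ^d → ℂ be bounded and measurable. Then the magnetic quantization is gauge covariant: for every x ∈ ℝ^d, e^{−iφ(x)} · (Op^A(a)(e^{iφ} w))(x) = (Op^{Ã}(a) w)(x), where Ã := A − ∇φ. -/

import Mathlib

open MeasureTheory
open scoped RealInnerProductSpace

/-- Circulation vector `Γ^A(x,y) := ∫₀¹ A((1−s)x + sy) ds`. -/
noncomputable def GammaA {d : ℕ} (A : EuclideanSpace ℝ (Fin d) → EuclideanSpace ℝ (Fin d))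
    (x y : EuclideanSpace ℝ (Fin d)) : EuclideanSpace ℝ (Fin d) :=
  ∫ s in (0:ℝ)..1, A ((1 - s) • x + s • y)

/-- The magnetic pseudodifferential operator
`(Op^A(a)u)(x) := (2π)^{−d} ∫∫ e^{i⟨x−y, ξ+Γ^A(x,y)⟩} a((x+y)/2, ξ) u(y) dy dξ`. -/
noncomputable def magOp {d : ℕ} (A : EuclideanSpace ℝ (Fin d) → EuclideanSpace ℝ (Fin d))
    (a : EuclideanSpace ℝ (Fin d) × EuclideanSpace ℝ (Fin d) → ℂ)
    (u : EuclideanSpace ℝ (Fin d) → ℂ) (x : EuclideanSpace ℝ (Fin d)) : ℂ :=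
  (((2 * Real.pi) ^ d)⁻¹ : ℝ) •
    ∫ ξ : EuclideanSpace ℝ (Fin d), ∫ y : EuclideanSpace ℝ (Fin d),
      Complex.exp (Complex.I * ((⟪x - y, ξ + GammaA A x y⟫ : ℝ) : ℂ)) *
        a ((2 : ℝ)⁻¹ • (x + y), ξ) * u y

section aux

variable {d : ℕ}

lemma continuous_gradient {φ : EuclideanSpace ℝ (Fin d) → ℝ} (hφ : ContDiff ℝ 1 φ) :
    Continuous (gradient φ) := by
  have h : Continuous (fderiv ℝ φ) := hφ.continuous_fderiv one_ne_zero
  exact (InnerProductSpace.toDual ℝ (EuclideanSpace ℝ (Fin d))).symm.continuous.comp h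

lemma GammaA_sub {A B : EuclideanSpace ℝ (Fin d) → EuclideanSpace ℝ (Fin d)}
    (hA : Continuous A) (hB : Continuous B) (x y : EuclideanSpace ℝ (Fin d)) :
    GammaA (fun z => A z - B z) x y = GammaA A x y - GammaA B x y := by
  have hpath : Continuous fun s : ℝ => (1 - s) • x + s • y := by fun_prop
  have h1 : Continuous fun s : ℝ => A ((1 - s) • x + s • y) := hA.comp hpath
  have h2 : Continuous fun s : ℝ => B ((1 - s) • x + s • y) := hB.comp hpath
  unfold GammaA
  rw [intervalIntegral.integral_sub (h1.intervalIntegrable 0 1)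
    (h2.intervalIntegrable 0 1)]

lemma inner_GammaA_gradient {φ : EuclideanSpace ℝ (Fin d) → ℝ} (hφ : ContDiff ℝ 1 φ)
    (x y : EuclideanSpace ℝ (Fin d)) :
    ⟪x - y, GammaA (gradient φ) x y⟫ = φ x - φ y := by
  have hpath : ∀ s : ℝ, HasDerivAt (fun t : ℝ => (1 - t) • x + t • y) (y - x) s := by
    intro s
    have h1 : HasDerivAt (fun t : ℝ => (1 - t) • x) (-x) s := by
      simpa using ((hasDerivAt_id s).const_sub 1).smul_const x
    have h2 : HasDerivAt (fun t : ℝ => t • y) y s := by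
      simpa using (hasDerivAt_id s).smul_const y
    exact (h1.add h2).congr_deriv (by abel)
  have hgrad : Continuous (gradient φ) := continuous_gradient hφ
  have hcont : Continuous fun s : ℝ => (1 - s) • x + s • y := by fun_prop
  have hIntA : IntervalIntegrable (fun s : ℝ => gradient φ ((1 - s) • x + s • y))
      volume 0 1 := ((hgrad.comp hcont).intervalIntegrable 0 1)
  -- pull the inner product inside the integral
  have key : ⟪x - y, GammaA (gradient φ) x y⟫ =
      ∫ s in (0:ℝ)..1, ⟪x - y, gradient φ ((1 - s) • x + s • y)⟫ := by
    unfold GammaA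
    exact ((innerSL ℝ (x - y)).intervalIntegral_comp_comm hIntA).symm
  rw [key]
  -- FTC along the path
  have hderiv : ∀ s ∈ Set.uIcc (0:ℝ) 1,
      HasDerivAt (fun t : ℝ => φ ((1 - t) • x + t • y))
        (⟪gradient φ ((1 - s) • x + s • y), y - x⟫) s := by
    intro s _
    have hdφ : DifferentiableAt ℝ φ ((1 - s) • x + s • y) :=
      (hφ.differentiable one_ne_zero).differentiableAt
    have := (hdφ.hasFDerivAt).comp_hasDerivAt s (hpath s)
    have heq : fderiv ℝ φ ((1 - s) • x + s • y) (y - x) =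
        ⟪gradient φ ((1 - s) • x + s • y), y - x⟫ := by
      rw [gradient]
      rw [← InnerProductSpace.toDual_apply_apply,
        (InnerProductSpace.toDual ℝ (EuclideanSpace ℝ (Fin d))).apply_symm_apply]
    rw [heq] at this
    exact this
  have hint : IntervalIntegrable
      (fun s : ℝ => (⟪gradient φ ((1 - s) • x + s • y), y - x⟫ : ℝ)) volume 0 1 := by
    exact ((hgrad.comp hcont).inner continuous_const).intervalIntegrable 0 1
  have := intervalIntegral.integral_eq_sub_of_hasDerivAt hderiv hint
  simp only [smul_eq_mul, one_smul, zero_smul, sub_zero, sub_self, zero_add, add_zero] at this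
  have : ∫ s in (0:ℝ)..1, (⟪gradient φ ((1 - s) • x + s • y), y - x⟫ : ℝ) = φ y - φ x := by
    simpa using this
  calc (∫ s in (0:ℝ)..1, (⟪x - y, gradient φ ((1 - s) • x + s • y)⟫ : ℝ))
      = ∫ s in (0:ℝ)..1, -(⟪gradient φ ((1 - s) • x + s • y), y - x⟫ : ℝ) := by
        congr 1; funext s
        rw [real_inner_comm, ← inner_neg_right, neg_sub]
    _ = -(φ y - φ x) := by rw [intervalIntegral.integral_neg, this]
    _ = φ x - φ y := by ring

end aux

theorem magOp_gauge_covariant {d : ℕ} (hd : 1 ≤ d)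
    (A : EuclideanSpace ℝ (Fin d) → EuclideanSpace ℝ (Fin d)) (hA : Continuous A)
    (φ : EuclideanSpace ℝ (Fin d) → ℝ) (hφ : ContDiff ℝ 1 φ)
    (a : SchwartzMap (EuclideanSpace ℝ (Fin d) × EuclideanSpace ℝ (Fin d)) ℂ)
    (w : EuclideanSpace ℝ (Fin d) → ℂ) (hw : Measurable w)
    (C : ℝ) (hwb : ∀ y, ‖w y‖ ≤ C) (x : EuclideanSpace ℝ (Fin d)) :
    Complex.exp (-Complex.I * ((φ x : ℝ) : ℂ)) *
      magOp A (⇑a) (fun y => Complex.exp (Complex.I * ((φ y : ℝ) : ℂ)) * w y) x =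
      magOp (fun y => A y - gradient φ y) (⇑a) w x := by
  unfold magOp
  rw [mul_smul_comm]
  congr 1
  rw [← MeasureTheory.integral_const_mul]
  congr 1; funext ξ
  rw [← MeasureTheory.integral_const_mul]
  congr 1; funext y
  have hG : GammaA (fun z => A z - gradient φ z) x y =
      GammaA A x y - GammaA (gradient φ) x y :=
    GammaA_sub hA (continuous_gradient hφ) x y
  have hinner : (⟪x - y, ξ + GammaA (fun z => A z - gradient φ z) x y⟫ : ℝ) =
      ⟪x - y, ξ + GammaA A x y⟫ - (φ x - φ y) := by
    rw [hG, ← inner_GammaA_gradient hφ x y]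
    rw [inner_add_right, inner_add_right, inner_sub_right]
    ring
  rw [hinner]
  have hexp : Complex.exp (Complex.I *
        (((⟪x - y, ξ + GammaA A x y⟫ - (φ x - φ y) : ℝ)) : ℂ)) =
      Complex.exp (-Complex.I * ((φ x : ℝ) : ℂ)) *
        Complex.exp (Complex.I * ((⟪x - y, ξ + GammaA A x y⟫ : ℝ) : ℂ)) *
        Complex.exp (Complex.I * ((φ y : ℝ) : ℂ)) := by
    rw [← Complex.exp_add, ← Complex.exp_add]
    congr 1
    push_cast
    ring
  rw [hexp]
  ring
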